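/- Let n be a positive integer, let ρ > 0 and τ > 0 be real numbers, and let A be a real symmetric positive semidefinite n×n matrix with eigenvalues σ₁, …, σₙ ≥ 0. Then for every real n×n matrix L, (ρ/2)·‖A − LᵀL‖_F² + τ·‖L‖_* ≥ Σᵢ₌₁ⁿ inf_{γ ≥ 0} [ (ρ/2)·(σᵢ − γ²)² + τ·γ ]. -/

import Mathlib

open Matrix BigOperators Finset

noncomputable def frobNormSq {m n : ℕ} (M : Matrix (Fin m) (Fin n) ℝ) : ℝ :=
  ∑ i, ∑ j, (M i j)^2

noncomputable def singularValues {m n : ℕ} (M : Matrix (Fin m) (Fin n) ℝ) : Fin n → ℝ :=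
  fun i => Real.sqrt ((Matrix.isHermitian_conjTranspose_mul_self M).eigenvalues i)

noncomputable def nuclearNorm {m n : ℕ} (M : Matrix (Fin m) (Fin n) ℝ) : ℝ :=
  ∑ i, singularValues M i

/-!
Diagonalize `A = U diag(σ) Uᵀ` and `LᵀL = V diag(μ) Vᵀ` with `U`, `V` orthogonal. Since the
Frobenius norm is orthogonally invariant, `‖A - LᵀL‖_F² = ∑ₖₗ Wₖₗ² (σₖ - μₗ)²` for the orthogonal
matrix `W = UᵀV`, whose entrywise squares form a doubly stochastic matrix; the column sums also
give `‖L‖_* = ∑ₗ √μₗ = ∑ₖₗ Wₖₗ² √μₗ`. The left-hand side is therefore a doubly stochastic average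
of the values of the `k`-th scalar objective at `γ = √μₗ`, each at least the `k`-th infimum.
-/

lemma frobNormSq_eq_trace {m n : ℕ} (M : Matrix (Fin m) (Fin n) ℝ) :
    frobNormSq M = trace (Mᴴ * M) := by
  simp only [frobNormSq, trace, Matrix.diag, mul_apply, conjTranspose_apply, star_trivial, sq]
  exact sum_comm

lemma frobNormSq_mul_mul_star_of_mem_unitaryGroup {n : ℕ} {U V : Matrix (Fin n) (Fin n) ℝ}
    (hU : U ∈ unitaryGroup (Fin n) ℝ) (hV : V ∈ unitaryGroup (Fin n) ℝ)
    (M : Matrix (Fin n) (Fin n) ℝ) : frobNormSq (U * M * star V) = frobNormSq M := by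
  rw [frobNormSq_eq_trace, frobNormSq_eq_trace, conjTranspose_mul, conjTranspose_mul,
    ← star_eq_conjTranspose, ← star_eq_conjTranspose, star_star]
  calc trace (V * (Mᴴ * star U) * (U * M * star V))
      = trace (Mᴴ * star U * (U * M * star V) * V) := by
        rw [Matrix.mul_assoc V, trace_mul_comm]
    _ = trace (Mᴴ * (star U * U) * M * (star V * V)) := by simp only [Matrix.mul_assoc]
    _ = trace (Mᴴ * M) := by
        rw [Unitary.star_mul_self_of_mem hU, Unitary.star_mul_self_of_mem hV, Matrix.mul_one,
          Matrix.mul_one]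

lemma norm_sq_mem_doublyStochastic_of_mem_unitaryGroup {𝕜 n : Type*} [RCLike 𝕜] [Fintype n]
    [DecidableEq n] {W : Matrix n n 𝕜} (hW : W ∈ unitaryGroup n 𝕜) :
    of (fun k l => ‖W k l‖ ^ 2) ∈ doublyStochastic ℝ n := by
  rw [mem_doublyStochastic_iff_sum]
  refine ⟨fun _ _ => sq_nonneg _, fun k => ?_, fun l => ?_⟩
  · have h : (W * star W) k k = (1 : Matrix n n 𝕜) k k := by rw [Unitary.mul_star_self_of_mem hW]
    simp only [mul_apply, star_apply, one_apply_eq, RCLike.star_def, RCLike.mul_conj] at h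
    exact_mod_cast h
  · have h : (star W * W) l l = (1 : Matrix n n 𝕜) l l := by rw [Unitary.star_mul_self_of_mem hW]
    simp only [mul_apply, star_apply, one_apply_eq, RCLike.star_def, RCLike.conj_mul] at h
    exact_mod_cast h

lemma frobNormSq_sub_eq_sum {n : ℕ} {A B : Matrix (Fin n) (Fin n) ℝ} (hA : A.IsHermitian)
    (hB : B.IsHermitian) :
    frobNormSq (A - B) = ∑ k, ∑ l,
      ‖(star (hA.eigenvectorUnitary : Matrix (Fin n) (Fin n) ℝ) * hB.eigenvectorUnitary) k l‖ ^ 2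
        * (hA.eigenvalues k - hB.eigenvalues l) ^ 2 := by
  set U := (hA.eigenvectorUnitary : Matrix (Fin n) (Fin n) ℝ)
  set V := (hB.eigenvectorUnitary : Matrix (Fin n) (Fin n) ℝ)
  have hU : U * star U = 1 := Unitary.mul_star_self_of_mem hA.eigenvectorUnitary.2
  have hV : V * star V = 1 := Unitary.mul_star_self_of_mem hB.eigenvectorUnitary.2
  have hA' : A = U * diagonal hA.eigenvalues * star U := by
    conv_lhs => rw [hA.spectral_theorem]
    simp [U, RCLike.ofReal_real_eq_id]
  have hB' : B = V * diagonal hB.eigenvalues * star V := by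
    conv_lhs => rw [hB.spectral_theorem]
    simp [V, RCLike.ofReal_real_eq_id]
  have hsub : A - B = U * (diagonal hA.eigenvalues * (star U * V)
      - star U * V * diagonal hB.eigenvalues) * star V := by
    conv_lhs => rw [hA', hB']
    simp only [Matrix.mul_sub, Matrix.sub_mul, ← Matrix.mul_assoc, hU, Matrix.one_mul]
    simp only [Matrix.mul_assoc, hV, Matrix.mul_one]
  rw [hsub, frobNormSq_mul_mul_star_of_mem_unitaryGroup hA.eigenvectorUnitary.2
    hB.eigenvectorUnitary.2]
  refine sum_congr rfl fun k _ => sum_congr rfl fun l _ => ?_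
  rw [Matrix.sub_apply, diagonal_mul, mul_diagonal, Real.norm_eq_abs, sq_abs]
  ring

lemma sum_le_sum_sum_mul_of_mem_doublyStochastic {R n : Type*} [Semiring R] [PartialOrder R]
    [IsOrderedRing R] [Fintype n] [DecidableEq n] {S : Matrix n n R}
    (hS : S ∈ doublyStochastic R n) {c : n → R} {F : n → n → R} (h : ∀ i j, c i ≤ F i j) :
    ∑ i, c i ≤ ∑ i, ∑ j, S i j * F i j :=
  calc ∑ i, c i = ∑ i, ∑ j, S i j * c i := by
        simp only [← sum_mul, sum_row_of_mem_doublyStochastic hS, one_mul]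
    _ ≤ ∑ i, ∑ j, S i j * F i j := sum_le_sum fun i _ => sum_le_sum fun j _ =>
        mul_le_mul_of_nonneg_left (h i j) (nonneg_of_mem_doublyStochastic hS)

lemma sInf_objective_le_sqrt {ρ τ : ℝ} (hρ : 0 ≤ ρ) (hτ : 0 ≤ τ) (σ : ℝ) {μ : ℝ} (hμ : 0 ≤ μ) :
    sInf ((fun γ : ℝ => ρ / 2 * (σ - γ ^ 2) ^ 2 + τ * γ) '' Set.Ici 0)
      ≤ ρ / 2 * (σ - μ) ^ 2 + τ * √μ := by
  have hbdd : BddBelow ((fun γ : ℝ => ρ / 2 * (σ - γ ^ 2) ^ 2 + τ * γ) '' Set.Ici 0) := by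
    refine ⟨0, ?_⟩
    rintro _ ⟨γ, hγ : 0 ≤ γ, rfl⟩
    positivity
  calc _ ≤ ρ / 2 * (σ - √μ ^ 2) ^ 2 + τ * √μ := csInf_le hbdd ⟨√μ, Real.sqrt_nonneg μ, rfl⟩
    _ = ρ / 2 * (σ - μ) ^ 2 + τ * √μ := by rw [Real.sq_sqrt hμ]

theorem stmt_1_general (n : ℕ) (ρ τ : ℝ) (hρ : 0 < ρ) (hτ : 0 < τ)
    (A : Matrix (Fin n) (Fin n) ℝ) (hA : A.PosSemidef)
    (L : Matrix (Fin n) (Fin n) ℝ) :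
    ρ / 2 * frobNormSq (A - Lᵀ * L) + τ * nuclearNorm L ≥
      ∑ i, sInf ((fun γ : ℝ =>
        ρ / 2 * (hA.1.eigenvalues i - γ ^ 2) ^ 2 + τ * γ) '' Set.Ici 0) := by
  have hB := isHermitian_conjTranspose_mul_self L
  have hμ := (posSemidef_conjTranspose_mul_self L).eigenvalues_nonneg
  set W := star (hA.1.eigenvectorUnitary : Matrix (Fin n) (Fin n) ℝ) * hB.eigenvectorUnitary
  have hS := norm_sq_mem_doublyStochastic_of_mem_unitaryGroup
    (mul_mem (Unitary.star_mem hA.1.eigenvectorUnitary.2) hB.eigenvectorUnitary.2)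
  rw [← conjTranspose_eq_transpose_of_trivial, frobNormSq_sub_eq_sum hA.1 hB]
  calc _ ≤ ∑ k, ∑ l, ‖W k l‖ ^ 2 * (ρ / 2 * (hA.1.eigenvalues k - hB.eigenvalues l) ^ 2
          + τ * √(hB.eigenvalues l)) :=
        sum_le_sum_sum_mul_of_mem_doublyStochastic hS fun k l =>
          sInf_objective_le_sqrt hρ.le hτ.le _ (hμ l)
    _ = _ := by
        have hnuclear : ∑ k, ∑ l, ‖W k l‖ ^ 2 * (τ * √(hB.eigenvalues l)) = τ * nuclearNorm L := by
          rw [nuclearNorm, mul_sum]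
          exact sum_mulVec_of_mem_doublyStochastic hS
        rw [← hnuclear, mul_sum, ← sum_add_distrib]
        refine sum_congr rfl fun k _ => ?_
        rw [mul_sum, ← sum_add_distrib]
        exact sum_congr rfl fun l _ => by ring

/-- For every real n×n matrix L,
(ρ/2)·‖A − LᵀL‖_F² + τ·‖L‖_* ≥ ∑ᵢ inf_{γ ≥ 0} [(ρ/2)·(σᵢ − γ²)² + τ·γ],
where σᵢ are the eigenvalues of the PSD matrix A. -/
theorem stmt_1 (n : ℕ) (hn : 0 < n) (ρ τ : ℝ) (hρ : 0 < ρ) (hτ : 0 < τ)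
    (A : Matrix (Fin n) (Fin n) ℝ) (hA : A.PosSemidef)
    (L : Matrix (Fin n) (Fin n) ℝ) :
    ρ / 2 * frobNormSq (A - Lᵀ * L) + τ * nuclearNorm L ≥
      ∑ i, sInf ((fun γ : ℝ =>
        ρ / 2 * (hA.1.eigenvalues i - γ ^ 2) ^ 2 + τ * γ) '' Set.Ici 0) :=
  stmt_1_general n ρ τ hρ hτ A hA L
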